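/- arXiv:1805.08812 — 2 statements merged into one kernel-verified Lean document; each statement's English description precedes it below -/
import Mathlib

section
/- Let A be an evolution algebra with natural basis {e_i : i ∈ Λ} and structure matrix (ω_ij), and let M be a non-zero modular ideal with support Λ_M. Then for every i ∈ Λ \ Λ_M, D(i) \ {i} ⊆ Λ_M, where D(i) is the set of descendents of i. -/
/-- First-generation descendents of an index `i` w.r.t. structure constants `ω`:
`D¹(i) = {j | ω j i ≠ 0}`. -/
def descOne {ι K : Type*} [Zero K] (ω : ι → ι → K) (i : ι) : Set ι := {j | ω j i ≠ 0}

/-- `descIter ω n i` is the set `Dⁿ(i)` of `n`-th generation descendents (with the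
convention `D⁰(i) = {i}`), so `Dⁿ(i) = ∪_{j ∈ Dⁿ⁻¹(i)} D¹(j)`. -/
def descIter {ι K : Type*} [Zero K] (ω : ι → ι → K) : ℕ → ι → Set ι
  | 0, i => {i}
  | n + 1, i => ⋃ j ∈ descIter ω n i, descOne ω j

/-- The set of descendents `D(i) = ∪_{n ≥ 1} Dⁿ(i)`. -/
def descSet {ι K : Type*} [Zero K] (ω : ι → ι → K) (i : ι) : Set ι :=
  ⋃ n : ℕ, descIter ω (n + 1) i

/-
Multiplying by a basis vector projects onto it: `e_j a = a_j e_j²`. Hence a left ideal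
containing an element with `a_j ≠ 0` also contains one whose support is `D¹(j)`, so `Λ_M` is
closed under taking children. For `i ∉ Λ_M`, the element `e_i - e_i u ∈ M` has coefficients
`δ_il - u_i ω_li`; its `i`-th coefficient vanishes, forcing `u_i ≠ 0`, so every child `k ≠ i`
of `i` lies in `Λ_M`. Thus `Λ_M ∪ {i}` is closed under children and contains `D(i)`.
-/

theorem descIter_subset_of_descOne_subset {ι K : Type*} [Zero K] {ω : ι → ι → K} {i : ι}
    {S : Set ι} (hi : i ∈ S) (hS : ∀ j ∈ S, descOne ω j ⊆ S) (n : ℕ) :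
    descIter ω n i ⊆ S := by
  induction n with
  | zero => simpa [descIter] using hi
  | succ n ih => exact Set.iUnion₂_subset fun j hj => hS j (ih hj)

theorem descSet_subset_of_descOne_subset {ι K : Type*} [Zero K] {ω : ι → ι → K} {i : ι}
    {S : Set ι} (hi : i ∈ S) (hS : ∀ j ∈ S, descOne ω j ⊆ S) : descSet ω i ⊆ S :=
  Set.iUnion_subset fun n => descIter_subset_of_descOne_subset hi hS (n + 1)

namespace Module.Basis

variable {ι K A : Type*}

/-- The support `Λ_M` of a submodule `M` with respect to the basis `b`. -/
def supportOf [Semiring K] [AddCommMonoid A] [Module K A] (b : Basis ι K A)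
    (M : Submodule K A) : Set ι :=
  {k | ∃ a ∈ M, b.repr a k ≠ 0}

theorem mul_eq_repr_smul_mul_self [Semiring K] [NonUnitalNonAssocSemiring A] [Module K A]
    [SMulCommClass K A A] (b : Basis ι K A) (hnat : ∀ i j : ι, i ≠ j → b i * b j = 0)
    (j : ι) (a : A) : b j * a = b.repr a j • (b j * b j) := by
  classical
  conv_lhs => rw [← b.linearCombination_repr a, Finsupp.linearCombination_apply,
    Finsupp.mul_sum]
  rw [Finsupp.sum_eq_single j (fun l _ hlj => by rw [mul_smul_comm, hnat j l (Ne.symm hlj),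
    smul_zero]) (by simp), mul_smul_comm]

theorem descOne_subset_supportOf [Semiring K] [NoZeroDivisors K] [NonUnitalNonAssocSemiring A]
    [Module K A] [SMulCommClass K A A] (b : Basis ι K A)
    (hnat : ∀ i j : ι, i ≠ j → b i * b j = 0) {M : Submodule K A}
    (hideal : ∀ x : A, ∀ a ∈ M, x * a ∈ M) {j : ι} (hj : j ∈ b.supportOf M) :
    descOne (fun k l => b.repr (b l * b l) k) j ⊆ b.supportOf M := by
  obtain ⟨a, haM, haj⟩ := hj
  intro k hk
  refine ⟨b j * a, hideal (b j) a haM, ?_⟩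
  rw [b.mul_eq_repr_smul_mul_self hnat, map_smul, Finsupp.smul_apply, smul_eq_mul]
  exact mul_ne_zero haj hk

theorem descOne_subset_insert_supportOf [Ring K] [IsDomain K] [NonUnitalNonAssocRing A]
    [Module K A] [SMulCommClass K A A] (b : Basis ι K A)
    (hnat : ∀ i j : ι, i ≠ j → b i * b j = 0) {M : Submodule K A} {u : A} {i : ι}
    (hu : b i - b i * u ∈ M) (hi : i ∉ b.supportOf M) :
    descOne (fun k l => b.repr (b l * b l) k) i ⊆ insert i (b.supportOf M) := by
  classical
  have hrepr : ∀ l, b.repr (b i - b i * u) l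
      = (if i = l then 1 else 0) - b.repr u i * b.repr (b i * b i) l := fun l => by
    rw [map_sub, b.mul_eq_repr_smul_mul_self hnat, map_smul, Finsupp.sub_apply,
      Finsupp.smul_apply, smul_eq_mul, b.repr_self, Finsupp.single_apply]
  have hui : b.repr u i ≠ 0 := by
    intro h
    exact hi ⟨_, hu, by rw [hrepr, h, zero_mul, sub_zero, if_pos rfl]; exact one_ne_zero⟩
  intro k hk
  by_cases hki : k = i
  · exact Or.inl hki
  · refine Or.inr ⟨_, hu, ?_⟩
    rw [hrepr, if_neg (Ne.symm hki), zero_sub, neg_ne_zero]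
    exact mul_ne_zero hui hk

end Module.Basis

theorem stmt10_general {K : Type*} [Field K] {A : Type*} [NonUnitalNonAssocRing A]
    [Module K A] [SMulCommClass K A A]
    {ι : Type*} (b : Module.Basis ι K A) (hnat : ∀ i j : ι, i ≠ j → b i * b j = 0)
    (M : Submodule K A)
    (hideal : ∀ x : A, ∀ a ∈ M, x * a ∈ M ∧ a * x ∈ M)
    (hmod : ∃ u : A, ∀ a : A, a - a * u ∈ M) :
    ∀ i : ι, (¬ ∃ a ∈ M, b.repr a i ≠ 0) →
      ∀ k : ι, k ∈ descSet (fun j i' => b.repr (b i' * b i') j) i → k ≠ i →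
        ∃ a ∈ M, b.repr a k ≠ 0 := by
  intro i hi k hk hki
  obtain ⟨u, hu⟩ := hmod
  have hclosed : ∀ j ∈ insert i (b.supportOf M),
      descOne (fun k l => b.repr (b l * b l) k) j ⊆ insert i (b.supportOf M) := by
    rintro j (rfl | hj)
    · exact b.descOne_subset_insert_supportOf hnat (hu (b j)) hi
    · exact (b.descOne_subset_supportOf hnat (fun x a ha => (hideal x a ha).1) hj).trans
        (Set.subset_insert _ _)
  exact (descSet_subset_of_descOne_subset (Set.mem_insert i _) hclosed hk).resolve_left hki

/-- If `M` is a non-zero modular ideal of an evolution algebra with support `Λ_M`, then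
for every `i ∈ Λ \ Λ_M` one has `D(i) \ {i} ⊆ Λ_M`. -/
theorem stmt10 {K : Type*} [Field K] {A : Type*} [NonUnitalNonAssocRing A]
    [Module K A] [SMulCommClass K A A] [IsScalarTower K A A]
    {ι : Type*} (b : Module.Basis ι K A) (hnat : ∀ i j : ι, i ≠ j → b i * b j = 0)
    (M : Submodule K A)
    (hideal : ∀ x : A, ∀ a ∈ M, x * a ∈ M ∧ a * x ∈ M)
    (hmod : ∃ u : A, ∀ a : A, a - a * u ∈ M)
    (hM : M ≠ ⊥) :
    ∀ i : ι, (¬ ∃ a ∈ M, b.repr a i ≠ 0) →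
      ∀ k : ι, k ∈ descSet (fun j i' => b.repr (b i' * b i') j) i → k ≠ i →
        ∃ a ∈ M, b.repr a k ≠ 0 :=
  stmt10_general b hnat M hideal hmod
end

section
/- A non-zero evolution algebra A is semisimple (i.e., the intersection of its maximal modular ideals is {0}) if and only if A is a non-zero trivial evolution algebra (i.e., relative to a natural basis, e_i² = ω_ii e_i with ω_ii ≠ 0 for all i). Consequently, a finite-dimensional evolution algebra is semisimple if and only if it has a unit. -/
section Defs

variable {K : Type*} [Field K] {A : Type*} [NonUnitalNonAssocRing A]
  [Module K A] [SMulCommClass K A A] [IsScalarTower K A A]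

/-- A submodule is an ideal if it absorbs multiplication on both sides. -/
def IsIdeal (M : Submodule K A) : Prop :=
  ∀ x : A, ∀ a ∈ M, x * a ∈ M ∧ a * x ∈ M

/-- A modular ideal: an ideal admitting a modular unit `u` with `a - a * u ∈ M` for all `a`. -/
def IsModularIdeal (M : Submodule K A) : Prop :=
  IsIdeal M ∧ ∃ u : A, ∀ a : A, a - a * u ∈ M

/-- A maximal modular ideal: a proper modular ideal maximal among proper ideals. -/
def IsMaxModularIdeal (M : Submodule K A) : Prop :=
  IsModularIdeal M ∧ M ≠ ⊤ ∧ ∀ N : Submodule K A, IsIdeal N → M < N → N = ⊤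

/-- The Jacobson radical: the intersection of all maximal modular ideals. -/
def jacobsonRad (K A : Type*) [Field K] [NonUnitalNonAssocRing A]
    [Module K A] [SMulCommClass K A A] [IsScalarTower K A A] : Submodule K A :=
  sInf {M : Submodule K A | IsMaxModularIdeal M}

end Defs

/-!
Write `x_i` for the `i`-th coordinate of `x`; in an evolution algebra `e_i a = a_i e_i²`.
If every `e_i² = ω_i e_i` with `ω_i ≠ 0`, multiplication is coordinatewise, so each
`ker (coord i)` is a maximal modular ideal with modular unit `ω_i⁻¹ e_i`, and these kernels
meet in `0`. Conversely, let `u` be a modular unit of a modular ideal `M` with `e_i ∉ M`, and put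
`μ = u_i`, `ω = (e_i²)_i`. Modulo `M`, `e_i ≡ e_i u = μ e_i²`, hence `e_i² ≡ μ e_i e_i² = μ ω e_i²`;
as `e_i² ∈ M` would give `e_i ∈ M`, this forces `μ ω = 1` and then `e_i² ≡ ω e_i`.
So `e_i² - ω e_i` lies in every modular ideal, as does `e_i` when `ω = 0`, and a zero radical
makes the algebra trivial. In finite dimension `∑ ω_i⁻¹ e_i` is a unit, and a unit `v` gives
`e_i = v e_i = v_i e_i²`.
-/

theorem Module.Basis.apply_eq_repr_smul_of_forall_ne {R M N ι : Type*} [CommSemiring R]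
    [AddCommMonoid M] [Module R M] [AddCommMonoid N] [Module R N] (b : Module.Basis ι R M)
    (i : ι) (φ : M →ₗ[R] N) (h : ∀ j, j ≠ i → φ (b j) = 0) (a : M) :
    φ a = b.repr a i • φ (b i) := by
  have hφ : φ = (b.coord i).smulRight (φ (b i)) := b.ext fun j => by
    rcases eq_or_ne j i with rfl | hj
    · simp
    · simp [h j hj, hj]
  simpa using congr($hφ a)

section Evolution

variable {K : Type*} [Field K] {A : Type*} [NonUnitalNonAssocRing A] [Module K A] {ι : Type*}

def IsNaturalBasis (b : Module.Basis ι K A) : Prop :=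
  ∀ i j : ι, i ≠ j → b i * b j = 0

def IsTrivialEvolutionBasis (b : Module.Basis ι K A) : Prop :=
  ∀ i : ι, ∃ ω : K, ω ≠ 0 ∧ b i * b i = ω • b i

theorem mem_jacobsonRad_of_forall_isModularIdeal [SMulCommClass K A A] [IsScalarTower K A A] {x : A}
    (h : ∀ M : Submodule K A, IsModularIdeal M → x ∈ M) : x ∈ jacobsonRad K A :=
  Submodule.mem_sInf.2 fun M hM => h M hM.1

namespace IsNaturalBasis

variable {b : Module.Basis ι K A} (hb : IsNaturalBasis b)
include hb

theorem basis_mul [SMulCommClass K A A] (i : ι) (a : A) : b i * a = b.repr a i • (b i * b i) :=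
  b.apply_eq_repr_smul_of_forall_ne i (LinearMap.mulLeft K (b i)) (fun j hj => hb i j hj.symm) a

theorem mul_basis [IsScalarTower K A A] (i : ι) (a : A) : a * b i = b.repr a i • (b i * b i) :=
  b.apply_eq_repr_smul_of_forall_ne i (LinearMap.mulRight K (b i)) (fun j hj => hb j i hj) a

theorem repr_mul [SMulCommClass K A A] [IsScalarTower K A A] {ω : ι → K}
    (hω : ∀ j, b j * b j = ω j • b j) (x a : A) (i : ι) :
    b.repr (x * a) i = b.repr a i * (b.repr x i * ω i) := by
  have hx : ∀ j, x * b j = (b.repr x j * ω j) • b j := fun j => by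
    rw [hb.mul_basis, hω, smul_smul]
  have := b.apply_eq_repr_smul_of_forall_ne i (b.coord i ∘ₗ LinearMap.mulLeft K x)
    (fun j hj => by simp [hx, hj]) a
  simpa [hx] using this

theorem isMaxModularIdeal_ker_coord [SMulCommClass K A A] [IsScalarTower K A A] {ω : ι → K}
    (hω : ∀ j, b j * b j = ω j • b j) {i : ι} (hωi : ω i ≠ 0) :
    IsMaxModularIdeal (LinearMap.ker (b.coord i)) := by
  have hcoatom : IsCoatom (LinearMap.ker (b.coord i)) :=
    LinearMap.isCoatom_ker_of_surjective fun c => ⟨c • b i, by simp⟩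
  refine ⟨⟨fun x a ha => ?_, (ω i)⁻¹ • b i, fun a => ?_⟩, hcoatom.1,
    fun N _ hN => hcoatom.2 N hN⟩
  · simp only [LinearMap.mem_ker, Module.Basis.coord_apply] at ha ⊢
    simp [hb.repr_mul hω, ha]
  · simp [hb.repr_mul hω, mul_comm (b.repr a i), hωi]

theorem jacobsonRad_eq_bot [SMulCommClass K A A] [IsScalarTower K A A]
    (ht : IsTrivialEvolutionBasis b) : jacobsonRad K A = ⊥ := by
  choose ω hω0 hω using ht
  refine (Submodule.eq_bot_iff _).2 fun x hx => b.ext_elem_iff.2 fun i => ?_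
  simpa using Submodule.mem_sInf.1 hx _ (hb.isMaxModularIdeal_ker_coord hω (hω0 i))

theorem sub_repr_smul_mul_self_mem [SMulCommClass K A A] {M : Submodule K A} {u : A}
    (hu : ∀ a, a - a * u ∈ M) (i : ι) : b i - b.repr u i • (b i * b i) ∈ M := by
  simpa [hb.basis_mul i u] using hu (b i)

theorem repr_mul_repr_mul_self_eq_one [SMulCommClass K A A] {M : Submodule K A}
    (hM : IsIdeal M) {u : A} (hu : ∀ a, a - a * u ∈ M) {i : ι} (hi : b i ∉ M) :
    b.repr u i * b.repr (b i * b i) i = 1 := by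
  have hd := hb.sub_repr_smul_mul_self_mem hu i
  by_contra hne
  have hmul : (1 - b.repr u i * b.repr (b i * b i) i) • (b i * b i) ∈ M := by
    convert (hM (b i) _ hd).1 using 1
    rw [mul_sub, mul_smul_comm, hb.basis_mul i (b i * b i), smul_smul, sub_smul, one_smul]
  have hsq : b i * b i ∈ M := (Submodule.smul_mem_iff M (sub_ne_zero.2 (Ne.symm hne))).1 hmul
  exact hi (by simpa using add_mem hd (M.smul_mem (b.repr u i) hsq))

theorem mul_self_sub_smul_mem [SMulCommClass K A A] {M : Submodule K A} (hM : IsModularIdeal M)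
    (i : ι) :
    b i * b i - b.repr (b i * b i) i • b i ∈ M := by
  obtain ⟨hM, u, hu⟩ := hM
  by_cases hi : b i ∈ M
  · exact sub_mem (hM _ _ hi).1 (M.smul_mem _ hi)
  · have h1 := hb.repr_mul_repr_mul_self_eq_one hM hu hi
    convert M.smul_mem (-b.repr (b i * b i) i) (hb.sub_repr_smul_mul_self_mem hu i) using 1
    rw [smul_sub, smul_smul, neg_mul, mul_comm, h1, neg_smul, neg_smul, one_smul,
      sub_neg_eq_add, neg_add_eq_sub]

theorem mem_of_repr_mul_self_eq_zero [SMulCommClass K A A] {M : Submodule K A}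
    (hM : IsModularIdeal M) {i : ι} (h0 : b.repr (b i * b i) i = 0) : b i ∈ M := by
  obtain ⟨hM, u, hu⟩ := hM
  by_contra hi
  simpa [h0] using hb.repr_mul_repr_mul_self_eq_one hM hu hi

theorem isTrivialEvolutionBasis_of_jacobsonRad_eq_bot [SMulCommClass K A A] [IsScalarTower K A A]
    (h : jacobsonRad K A = ⊥) :
    IsTrivialEvolutionBasis b := fun i => by
  refine ⟨b.repr (b i * b i) i, fun h0 => b.ne_zero i ?_, ?_⟩
  · simpa [h] using mem_jacobsonRad_of_forall_isModularIdeal fun M hM =>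
      hb.mem_of_repr_mul_self_eq_zero hM h0
  · simpa [h, sub_eq_zero] using mem_jacobsonRad_of_forall_isModularIdeal fun M hM =>
      hb.mul_self_sub_smul_mem hM i

theorem exists_unit [SMulCommClass K A A] [IsScalarTower K A A] [Finite ι]
    (ht : IsTrivialEvolutionBasis b) :
    ∃ e : A, ∀ a : A, a * e = a ∧ e * a = a := by
  have := Fintype.ofFinite ι
  choose ω hω0 hω using ht
  have hcancel : ∀ a i, (ω i)⁻¹ • b.repr a i • (b i * b i) = b.repr a i • b i :=
    fun a i => by
      rw [hω, smul_smul, smul_smul, mul_right_comm, inv_mul_cancel₀ (hω0 i), one_mul]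
  have hright : ∀ a i, a * ((ω i)⁻¹ • b i) = b.repr a i • b i := fun a i => by
    rw [mul_smul_comm, hb.mul_basis, hcancel]
  have hleft : ∀ a i, ((ω i)⁻¹ • b i) * a = b.repr a i • b i := fun a i => by
    rw [smul_mul_assoc, hb.basis_mul, hcancel]
  refine ⟨∑ i, (ω i)⁻¹ • b i, fun a => ⟨?_, ?_⟩⟩
  · simp only [Finset.mul_sum, hright, b.sum_repr]
  · simp only [Finset.sum_mul, hleft, b.sum_repr]

theorem isTrivialEvolutionBasis_of_mul_eq_self [IsScalarTower K A A] {e : A}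
    (he : ∀ a, e * a = a) :
    IsTrivialEvolutionBasis b := fun i => by
  have h1 : b.repr e i • (b i * b i) = b i := by rw [← hb.mul_basis]; exact he (b i)
  have hc : b.repr e i ≠ 0 := fun h0 => b.ne_zero i (by simpa [h0] using h1.symm)
  exact ⟨(b.repr e i)⁻¹, inv_ne_zero hc, (eq_inv_smul_iff₀ hc).2 h1⟩

end IsNaturalBasis

end Evolution

theorem stmt15_general {K : Type*} [Field K] {A : Type*} [NonUnitalNonAssocRing A]
    [Module K A] [SMulCommClass K A A] [IsScalarTower K A A]
    {ι : Type*} (b : Module.Basis ι K A) (hnat : ∀ i j : ι, i ≠ j → b i * b j = 0) :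
    (jacobsonRad K A = ⊥ ↔ ∀ i : ι, ∃ ω : K, ω ≠ 0 ∧ b i * b i = ω • b i) ∧
    (FiniteDimensional K A →
      (jacobsonRad K A = ⊥ ↔ ∃ e : A, ∀ a : A, a * e = a ∧ e * a = a)) := by
  have hb : IsNaturalBasis b := hnat
  have hsemisimple : jacobsonRad K A = ⊥ ↔ IsTrivialEvolutionBasis b :=
    ⟨hb.isTrivialEvolutionBasis_of_jacobsonRad_eq_bot, hb.jacobsonRad_eq_bot⟩
  refine ⟨hsemisimple, fun _ => hsemisimple.trans ⟨fun ht => ?_, fun ⟨e, he⟩ =>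
    hb.isTrivialEvolutionBasis_of_mul_eq_self fun a => (he a).2⟩⟩
  have := Module.Finite.finite_basis b
  exact hb.exists_unit ht

/-- A non-zero evolution algebra is semisimple (the intersection of its maximal modular
ideals is `{0}`) iff it is a non-zero trivial evolution algebra (`e_i² = ω_ii • e_i`,
`ω_ii ≠ 0`, relative to a natural basis). Consequently, a finite-dimensional evolution
algebra is semisimple iff it has a unit. -/
theorem stmt15 {K : Type*} [Field K] {A : Type*} [NonUnitalNonAssocRing A]
    [Module K A] [SMulCommClass K A A] [IsScalarTower K A A] [Nontrivial A]
    {ι : Type*} (b : Module.Basis ι K A) (hnat : ∀ i j : ι, i ≠ j → b i * b j = 0) :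
    (jacobsonRad K A = ⊥ ↔ ∀ i : ι, ∃ ω : K, ω ≠ 0 ∧ b i * b i = ω • b i) ∧
    (FiniteDimensional K A →
      (jacobsonRad K A = ⊥ ↔ ∃ e : A, ∀ a : A, a * e = a ∧ e * a = a)) :=
  stmt15_general b hnat
end
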